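/- arXiv:1106.1677 — 4 statements merged into one kernel-verified Lean document; each statement's English description precedes it below -/
import Mathlib

section
/- The Mori–Zwanzig identity: for every vector x, (d/dt) e^{tL} x = e^{tL} P L x + e^{tQL} Q L x + ∫₀ᵗ e^{(t−s)L} P L e^{sQL} Q L x ds, where P + Q = I. -/
/-!
Since `L = P L + Q L`, Duhamel's formula for the perturbation `Q L ↦ L` gives
`e^{tL} Q L x = e^{tQL} Q L x + ∫₀ᵗ e^{(t-s)L} P L e^{sQL} Q L x ds`, while
`(d/dt) e^{tL} x = e^{tL} L x = e^{tL} P L x + e^{tL} Q L x`.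
-/

open NormedSpace

section Duhamel

variable {𝔸 : Type*} [NormedRing 𝔸] [NormedAlgebra ℝ 𝔸] [CompleteSpace 𝔸]

theorem hasDerivAt_exp_smul_sub_mul_exp_smul (A B : 𝔸) (t s : ℝ) :
    HasDerivAt (fun s : ℝ => exp ((t - s) • A) * exp (s • B))
      (-(exp ((t - s) • A) * (A - B) * exp (s • B))) s := by
  have hA : HasDerivAt (fun s : ℝ => exp ((t - s) • A)) (-(exp ((t - s) • A) * A)) s := by
    simpa [Function.comp_def] using
      (hasDerivAt_exp_smul_const A (t - s)).scomp s ((hasDerivAt_id s).const_sub t)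
  refine (hA.mul (hasDerivAt_exp_smul_const' B s)).congr_deriv ?_
  noncomm_ring

theorem continuous_exp_smul_sub_mul_mul_exp_smul (A C B : 𝔸) (t : ℝ) :
    Continuous fun s : ℝ => exp ((t - s) • A) * C * exp (s • B) := by
  have hexp : ∀ D : 𝔸, Continuous fun u : ℝ => exp (u • D) :=
    fun D => (differentiable_exp_smul_const ℝ D).continuous
  exact (((hexp A).comp (continuous_const.sub continuous_id)).mul continuous_const).mul (hexp B)

/-- Duhamel's formula: integrate the derivative of `s ↦ e^{(t-s)A} e^{sB}` over `[0, t]`. -/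
theorem exp_smul_eq_exp_smul_add_integral (A B : 𝔸) (t : ℝ) :
    exp (t • A) =
      exp (t • B) + ∫ s in (0 : ℝ)..t, exp ((t - s) • A) * (A - B) * exp (s • B) := by
  have hFTC := intervalIntegral.integral_eq_sub_of_hasDerivAt
    (fun s _ => hasDerivAt_exp_smul_sub_mul_exp_smul A B t s)
    ((continuous_exp_smul_sub_mul_mul_exp_smul A (A - B) B t).neg.intervalIntegrable 0 t)
  simp only [intervalIntegral.integral_neg, sub_self, sub_zero, zero_smul, exp_zero, mul_one,
    one_mul] at hFTC
  rw [neg_eq_iff_eq_neg.1 hFTC]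
  abel

end Duhamel

theorem mori_zwanzig_identity_general
    (X : Type*) [NormedAddCommGroup X] [NormedSpace ℝ X] [CompleteSpace X]
    (L P : X →L[ℝ] X) (x : X) (t : ℝ) :
    HasDerivAt (fun τ : ℝ => exp (τ • L) x)
      (exp (t • L) (P (L x)) + exp (t • ((1 - P) * L)) ((1 - P) (L x)) +
        ∫ s in (0 : ℝ)..t,
          exp ((t - s) • L) (P (L (exp (s • ((1 - P) * L)) ((1 - P) (L x)))))) t := by
  set Q : X →L[ℝ] X := 1 - P
  have hsplit : L - Q * L = P * L := by simp only [Q]; noncomm_ring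
  have hduhamel := congr($(exp_smul_eq_exp_smul_add_integral L (Q * L) t) (Q (L x)))
  rw [hsplit, add_apply, ContinuousLinearMap.intervalIntegral_apply
    ((continuous_exp_smul_sub_mul_mul_exp_smul L (P * L) (Q * L) t).intervalIntegrable 0 t)]
    at hduhamel
  convert (hasDerivAt_exp_smul_const L t).clm_apply (hasDerivAt_const t x) using 1
  calc _ = exp (t • L) (P (L x)) + exp (t • L) (Q (L x)) := by
        rw [hduhamel]
        simp only [mul_apply_eq_comp]
        abel
    _ = _ := by simp [Q]

/-- The Mori–Zwanzig identity: for every vector `x`,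
`(d/dt) e^{tL} x = e^{tL} P L x + e^{tQL} Q L x + ∫₀ᵗ e^{(t−s)L} P L e^{sQL} Q L x ds`,
where `Q = I − P`. -/
theorem mori_zwanzig_identity
    (X : Type*) [NormedAddCommGroup X] [NormedSpace ℝ X] [CompleteSpace X]
    (L P : X →L[ℝ] X) (hP : P ∘L P = P) (x : X) (t : ℝ) :
    HasDerivAt (fun τ : ℝ => exp (τ • L) x)
      (exp (t • L) (P (L x)) + exp (t • ((1 - P) * L)) ((1 - P) (L x)) +
        ∫ s in (0 : ℝ)..t,
          exp ((t - s) • L) (P (L (exp (s • ((1 - P) * L)) ((1 - P) (L x)))))) t :=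
  mori_zwanzig_identity_general X L P x t
end

section
/- Taylor expansion of the simplified memory: if PL and QL commute, then ∫₀ᵗ e^{(t−s)L} P L e^{sQL} Q L x ds = ∑_{j=1}^{∞} (−1)^{j+1} (tʲ/j!) e^{tL} (PL)ʲ Q L x, with the series converging absolutely for all t. -/
/-!
Write `A = PL` and `B = QL`, so that `L = A + B` and `A` commutes with `L`. Then
`e^{(t-s)L} A e^{sB} = e^{tL} e^{-sA} A`, whose integral over `[0, t]` is `e^{tL} (1 - e^{-tA})`,
and expanding `1 - e^{-tA}` as a power series gives the stated series. Everything is proved in the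
Banach algebra of operators and then evaluated at `QLx`.
-/

open NormedSpace

theorem smul_pow_succ_eq_neg_expSeries_term {𝕂 𝔸 : Type*} [Field 𝕂] [Ring 𝔸] [Algebra 𝕂 𝔸]
    (A : 𝔸) (t : 𝕂) (n : ℕ) :
    ((-1 : 𝕂) ^ n * t ^ (n + 1) / (n + 1).factorial) • A ^ (n + 1)
      = -(((n + 1).factorial : 𝕂)⁻¹ • (t • -A) ^ (n + 1)) := by
  rw [smul_neg t A, ← neg_smul t A, smul_pow, smul_smul, ← neg_smul]
  congr 1
  ring

section Exponential

variable {𝕂 𝔸 : Type*} [RCLike 𝕂] [NormedRing 𝔸] [NormedAlgebra 𝕂 𝔸]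

theorem summable_norm_smul_pow_succ (A : 𝔸) (t : 𝕂) :
    Summable (fun n : ℕ => ‖((-1 : 𝕂) ^ n * t ^ (n + 1) / (n + 1).factorial) • A ^ (n + 1)‖) :=
  ((summable_nat_add_iff 1).mpr (norm_expSeries_summable' (𝕂 := 𝕂) (t • -A))).congr fun n => by
    rw [smul_pow_succ_eq_neg_expSeries_term, norm_neg]

variable [CompleteSpace 𝔸]

theorem hasSum_smul_pow_succ_one_sub_exp (A : 𝔸) (t : 𝕂) :
    HasSum (fun n : ℕ => ((-1 : 𝕂) ^ n * t ^ (n + 1) / (n + 1).factorial) • A ^ (n + 1))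
      (1 - exp (t • -A)) := by
  have h := ((hasSum_nat_add_iff' 1).mpr (exp_series_hasSum_exp' (𝕂 := 𝕂) (t • -A))).neg
  rw [Finset.sum_range_one, pow_zero, Nat.factorial_zero, Nat.cast_one, inv_one, one_smul,
    neg_sub] at h
  exact h.congr_fun (smul_pow_succ_eq_neg_expSeries_term A t)

theorem exp_sub_smul_mul_mul_exp_smul_sub {A L : 𝔸} (hAL : Commute A L) (t s : 𝕂) :
    exp ((t - s) • L) * (A * exp (s • (L - A))) = exp (t • L) * (exp (s • -A) * A) := by
  -- `exp_add_of_commute` is stated over `ℚ`; `exp` itself does not depend on this instance.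
  let : NormedAlgebra ℚ 𝔸 := .restrictScalars ℚ 𝕂 𝔸
  have hA_exp : ∀ u : 𝕂, Commute A (exp (u • L)) := fun u => (hAL.smul_right u).exp_right
  have hexp : exp ((t - s) • L) * exp (s • (L - A)) = exp (t • L) * exp (s • -A) := by
    rw [← exp_add_of_commute ((((Commute.refl L).sub_right hAL.symm).smul_right _).smul_left _),
      ← exp_add_of_commute ((hAL.symm.neg_right.smul_right _).smul_left _)]
    congr 1
    module
  calc exp ((t - s) • L) * (A * exp (s • (L - A)))
      = A * (exp ((t - s) • L) * exp (s • (L - A))) := by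
        rw [← mul_assoc, ← (hA_exp _).eq, mul_assoc]
    _ = exp (t • L) * (exp (s • -A) * A) := by
        rw [hexp, ← mul_assoc, (hA_exp t).eq, mul_assoc,
          ((Commute.refl A).neg_right.smul_right s).exp_right.eq]

end Exponential

theorem integral_exp_smul_neg_mul {𝔸 : Type*} [NormedRing 𝔸] [NormedAlgebra ℝ 𝔸] [CompleteSpace 𝔸]
    (A : 𝔸) (t : ℝ) : ∫ s in (0 : ℝ)..t, exp (s • -A) * A = 1 - exp (t • -A) := by
  have hderiv : ∀ s : ℝ, HasDerivAt (fun u : ℝ => -exp (u • -A)) (exp (s • -A) * A) s := by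
    intro s
    have h := (hasDerivAt_exp_smul_const (-A) s).neg
    rwa [mul_neg, neg_neg] at h
  have hcont : Continuous fun s : ℝ => exp (s • -A) * A :=
    (differentiable_exp_smul_const ℝ (-A)).continuous.mul continuous_const
  rw [intervalIntegral.integral_eq_sub_of_hasDerivAt (fun s _ => hderiv s)
    (hcont.intervalIntegrable 0 t), zero_smul, exp_zero]
  abel

theorem memory_taylor_expansion_general
    (X : Type*) [NormedAddCommGroup X] [NormedSpace ℝ X] [CompleteSpace X]
    (L P : X →L[ℝ] X)
    (hcomm : (P * L) * ((1 - P) * L) = ((1 - P) * L) * (P * L)) (x : X) (t : ℝ) :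
    HasSum
      (fun n : ℕ =>
        ((-1 : ℝ) ^ n * t ^ (n + 1) / (Nat.factorial (n + 1) : ℝ)) •
          exp (t • L) (((P * L) ^ (n + 1)) ((1 - P) (L x))))
      (∫ s in (0 : ℝ)..t,
        exp ((t - s) • L) (P (L (exp (s • ((1 - P) * L)) ((1 - P) (L x)))))) ∧
    Summable
      (fun n : ℕ =>
        ‖((-1 : ℝ) ^ n * t ^ (n + 1) / (Nat.factorial (n + 1) : ℝ)) •
            exp (t • L) (((P * L) ^ (n + 1)) ((1 - P) (L x)))‖) := by
  set A := P * L
  have hQL : (1 - P) * L = L - A := by rw [sub_mul, one_mul]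
  have hAL : Commute A L := by
    have h := (Commute.refl A).add_right (show Commute A ((1 - P) * L) from hcomm)
    rwa [hQL, add_sub_cancel] at h
  let Φ : (X →L[ℝ] X) →L[ℝ] X := (exp (t • L)).comp (.apply ℝ X ((1 - P) (L x)))
  have hintegrand : ∀ s : ℝ, exp ((t - s) • L) (P (L (exp (s • ((1 - P) * L)) ((1 - P) (L x)))))
      = Φ (exp (s • -A) * A) := fun s => by
    rw [hQL]
    exact congr($(exp_sub_smul_mul_mul_exp_smul_sub hAL t s) ((1 - P) (L x)))
  have hcont : Continuous fun s : ℝ => exp (s • -A) * A :=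
    (differentiable_exp_smul_const ℝ (-A)).continuous.mul continuous_const
  have hintegral := Φ.intervalIntegral_comp_comm (μ := MeasureTheory.volume)
    (hcont.intervalIntegrable 0 t)
  simp_rw [← hintegrand, integral_exp_smul_neg_mul] at hintegral
  have hterm : ∀ n : ℕ, Φ (((-1 : ℝ) ^ n * t ^ (n + 1) / (n + 1).factorial) • A ^ (n + 1))
      = ((-1 : ℝ) ^ n * t ^ (n + 1) / (n + 1).factorial) •
          exp (t • L) ((A ^ (n + 1)) ((1 - P) (L x))) :=
    fun n => map_smul Φ _ _
  constructor
  · rw [hintegral]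
    exact (Φ.hasSum (hasSum_smul_pow_succ_one_sub_exp A t)).congr_fun fun n => (hterm n).symm
  · refine .of_nonneg_of_le (fun n => norm_nonneg _) (fun n => ?_)
      ((summable_norm_smul_pow_succ A t).mul_left ‖Φ‖)
    rw [← hterm]
    exact Φ.le_opNorm _

/-- Taylor expansion of the simplified memory: if `PL` and `QL` commute, then
`∫₀ᵗ e^{(t−s)L} P L e^{sQL} Q L x ds = ∑_{j=1}^∞ (−1)^{j+1} (tʲ/j!) e^{tL} (PL)ʲ Q L x`,
with the series converging (unconditionally/absolutely) for all `t`.  Here `Q = I − P` and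
the sum is indexed by `n = j − 1`. -/
theorem memory_taylor_expansion
    (X : Type*) [NormedAddCommGroup X] [NormedSpace ℝ X] [CompleteSpace X]
    (L P : X →L[ℝ] X) (hP : P ∘L P = P)
    (hcomm : (P * L) * ((1 - P) * L) = ((1 - P) * L) * (P * L)) (x : X) (t : ℝ) :
    HasSum
      (fun n : ℕ =>
        ((-1 : ℝ) ^ n * t ^ (n + 1) / (Nat.factorial (n + 1) : ℝ)) •
          exp (t • L) (((P * L) ^ (n + 1)) ((1 - P) (L x))))
      (∫ s in (0 : ℝ)..t,
        exp ((t - s) • L) (P (L (exp (s • ((1 - P) * L)) ((1 - P) (L x)))))) ∧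
    Summable
      (fun n : ℕ =>
        ‖((-1 : ℝ) ^ n * t ^ (n + 1) / (Nat.factorial (n + 1) : ℝ)) •
            exp (t • L) (((P * L) ^ (n + 1)) ((1 - P) (L x)))‖) :=
  memory_taylor_expansion_general X L P hcomm x t
end

section
/- First-order memory term for Burgers: with the projection P replacing unresolved variables by zero, P L Q L u_{0k} = −ik ∑_{p+q=k, p∈F, q∈G} (P u_{0p}) (P L u_{0q}), i.e., twice the convolution of the resolved first-order part with the unresolved part of the quadratic term. -/
/-!
For `j ∉ G` the derivation `∂_j` commutes with the substitution `P`, while for `j ∈ G` it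
annihilates the image of `P`; as `P` is idempotent, `P ∂_j Q f` is `P ∂_j f` for `j ∈ G` and `0`
otherwise. Since `L u_{0k} = R_k`, this gives `P L Q L u_{0k} = ∑_{j ∈ G} P(R_j) · P ∂_j R_k`, and
`∂_j R_k = −ik u_{0,k−j}` survives `P` exactly when `k − j ∈ F`.
-/

open MvPolynomial Complex

theorem Finset.sum_ite_add_eq {ι M : Type*} [AddCommGroup ι] [DecidableEq ι] [AddCommMonoid M]
    (S : Finset ι) (q m : ι) (f : ι → M) :
    ∑ p ∈ S, (if p + q = m then f p else 0) = if m - q ∈ S then f (m - q) else 0 := by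
  simp_rw [← eq_sub_iff_add_eq]
  exact Finset.sum_ite_eq' S (m - q) f

namespace MvPolynomial

section ZeroVars

variable {R σ : Type*} [CommSemiring R] [DecidableEq σ] (G : Finset σ)

noncomputable def zeroVars : MvPolynomial σ R →ₐ[R] MvPolynomial σ R :=
  aeval fun j => if j ∈ G then 0 else X j

@[simp]
theorem zeroVars_X (i : σ) : zeroVars G (X i : MvPolynomial σ R) = if i ∈ G then 0 else X i :=
  aeval_X _ i

@[simp]
theorem zeroVars_C (a : R) : zeroVars G (C a : MvPolynomial σ R) = C a :=
  aeval_C _ a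

theorem zeroVars_zeroVars (f : MvPolynomial σ R) : zeroVars G (zeroVars G f) = zeroVars G f := by
  rw [← AlgHom.comp_apply]
  congr 1
  refine algHom_ext fun i => ?_
  by_cases hi : i ∈ G <;> simp [hi]

theorem pderiv_zeroVars (j : σ) (f : MvPolynomial σ R) :
    pderiv j (zeroVars G f) = if j ∈ G then 0 else zeroVars G (pderiv j f) := by
  induction f using MvPolynomial.induction_on with
  | C a => simp
  | add f g hf hg => simp only [map_add, hf, hg]; split_ifs <;> simp
  | mul_X f i hf =>
    have hX : pderiv j (zeroVars G (X i : MvPolynomial σ R)) =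
        if j ∈ G then 0 else zeroVars G (pderiv j (X i)) := by
      by_cases hi : i ∈ G <;> by_cases hij : j = i <;> simp [hi, hij]
    rw [map_mul, pderiv_mul, hf, hX, pderiv_mul, map_add, map_mul, map_mul]
    split_ifs <;> simp

end ZeroVars

theorem zeroVars_pderiv_sub_zeroVars {R σ : Type*} [CommRing R] [DecidableEq σ] (G : Finset σ)
    (j : σ) (f : MvPolynomial σ R) :
    zeroVars G (pderiv j (f - zeroVars G f)) = if j ∈ G then zeroVars G (pderiv j f) else 0 := by
  rw [map_sub, map_sub, pderiv_zeroVars]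
  split_ifs <;> simp [zeroVars_zeroVars]

theorem sum_mul_pderiv_X {R σ : Type*} [CommSemiring R] [DecidableEq σ] (S : Finset σ)
    (g : σ → MvPolynomial σ R) {m : σ} (hm : m ∈ S) :
    ∑ j ∈ S, g j * pderiv j (X m) = g m := by
  simp [Pi.single_apply, hm]

theorem pderiv_sum_sum_X_mul_X {ι R : Type*} [AddCommGroup ι] [DecidableEq ι] [CommSemiring R]
    (S : Finset ι) (m : ι) {j : ι} (hj : j ∈ S) :
    pderiv j (∑ p ∈ S, ∑ q ∈ S, if p + q = m then X p * X q else 0 : MvPolynomial ι R)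
      = 2 * if m - j ∈ S then X (m - j) else 0 := by
  simp only [map_sum, apply_ite (pderiv j), map_zero, pderiv_mul, pderiv_X, Pi.single_apply,
    ite_mul, mul_ite, one_mul, mul_one, zero_mul, mul_zero, ite_add_zero, Finset.sum_add_distrib]
  rw [Finset.sum_comm (f := fun p q => if p + q = m then (if q = j then X p else 0) else 0)]
  simp only [← ite_and, and_comm (b := _ = j)]
  simp only [ite_and, Finset.sum_ite_irrel, Finset.sum_const_zero, Finset.sum_ite_eq', hj,
    if_true, add_comm j, Finset.sum_ite_add_eq]
  rw [← two_mul, mul_ite, mul_zero]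

end MvPolynomial

/-- First-order memory term for Burgers.  Working in the polynomial algebra in the mode
variables `u_{0k}`, `k ∈ F ∪ G`, with `R_k = −(ik/2) ∑_{p+q=k} X_p X_q`,
`L f = ∑_k R_k ∂f/∂X_k`, `P` the substitution `X_q ↦ 0` for `q ∈ G`, and `Q = I − P`,
one has `P L Q L u_{0k} = −ik ∑_{p+q=k, p∈F, q∈G} (P u_{0p}) (P L u_{0q})`. -/
theorem burgers_first_order_memory
    (F G : Finset ℤ) (hFG : Disjoint F G) (k : ℤ) (hk : k ∈ F) :
    let R : ℤ → MvPolynomial ℤ ℂ := fun j =>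
      C (-(Complex.I * (j : ℂ) / 2)) *
        ∑ p ∈ F ∪ G, ∑ q ∈ F ∪ G, if p + q = j then X p * X q else 0
    let L : MvPolynomial ℤ ℂ → MvPolynomial ℤ ℂ := fun f =>
      ∑ j ∈ F ∪ G, R j * pderiv j f
    let P : MvPolynomial ℤ ℂ → MvPolynomial ℤ ℂ :=
      aeval (fun j : ℤ => if j ∈ G then (0 : MvPolynomial ℤ ℂ) else X j)
    P (L (L (X k) - P (L (X k)))) =
      C (-(Complex.I * (k : ℂ))) *
        ∑ p ∈ F, ∑ q ∈ G, if p + q = k then P (X p) * P (L (X q)) else 0 := by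
  intro R L P
  have hP : P = zeroVars G := rfl
  have hLX : ∀ m ∈ F ∪ G, L (X m) = R m := fun m hm => sum_mul_pderiv_X _ R hm
  have hPX : ∀ p ∈ F, P (X p) = X p := fun p hp => by
    simp [hP, Finset.disjoint_left.mp hFG hp]
  have hPdR : ∀ q ∈ F ∪ G,
      P (pderiv q (R k)) = C (-(I * k)) * if k - q ∈ F then X (k - q) else 0 := by
    intro q hq
    have h2 : C (-(I * k / 2)) * 2 = (C (-(I * k)) : MvPolynomial ℤ ℂ) := by
      rw [← map_ofNat C 2, ← C_mul]; congr 1; ring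
    simp only [R, pderiv_C_mul, pderiv_sum_sum_X_mul_X _ _ hq, hP, map_mul,
      apply_ite (zeroVars G), map_zero, zeroVars_X, zeroVars_C, ← mul_assoc, h2]
    congr 1
    by_cases hF : k - q ∈ F
    · simp [hF, Finset.disjoint_left.mp hFG hF]
    · by_cases hG : k - q ∈ G <;> simp [hF, hG]
  calc P (L (L (X k) - P (L (X k))))
      = ∑ q ∈ G, P (R q) * P (pderiv q (R k)) := by
        rw [hLX k (Finset.mem_union_left G hk)]
        simp only [L, map_sum, map_mul, hP, zeroVars_pderiv_sub_zeroVars, mul_ite, mul_zero]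
        rw [Finset.sum_ite_mem, Finset.union_inter_cancel_right]
    _ = C (-(I * k)) * ∑ q ∈ G, if k - q ∈ F then X (k - q) * P (R q) else 0 := by
        rw [Finset.mul_sum]
        refine Finset.sum_congr rfl fun q hq => ?_
        rw [hPdR q (Finset.mem_union_right F hq)]
        split_ifs <;> ring
    _ = _ := by
        rw [Finset.sum_comm]
        congr 1
        refine Finset.sum_congr rfl fun q hq => ?_
        rw [hLX q (Finset.mem_union_right F hq), Finset.sum_ite_add_eq]
        split_ifs with h
        · rw [hPX _ h]
        · rfl
end

section
/- For Burgers, let ṽ_q(û) = −(iq/2)∑_{r+s=q, r,s∈F} û_r û_s and let the first-order t-model memory term be R^{(1)}_{2k}(û) = t · (−ik) ∑_{p+q=k, p∈F, q∈G} û_p ṽ_q(û); then, under the reality condition, ∑_{k∈F} \overline{û_k} (−ik) ∑_{p+q=k, p∈F, q∈G} û_p ṽ_q + conjugate = −2 ∑_{q∈G} |ṽ_q|². -/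
open Complex

-- reindex sum over symmetric set by negation
lemma sum_neg_symm (F : Finset ℤ) (hF : ∀ k ∈ F, -k ∈ F) (h : ℤ → ℂ) :
    ∑ r ∈ F, h (-r) = ∑ r ∈ F, h r := by
  refine Finset.sum_nbij' (i := fun r => -r) (j := fun r => -r) ?_ ?_ ?_ ?_ ?_ <;>
    simp_all

lemma vneg_eq (F : Finset ℤ) (hF : ∀ k ∈ F, -k ∈ F) (u v : ℤ → ℂ)
    (hv : ∀ q : ℤ, v q =
      -(Complex.I * (q : ℂ) / 2) * ∑ r ∈ F, ∑ s ∈ F, if r + s = q then u r * u s else 0)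
    (q : ℤ) :
    v (-q) = Complex.I * (q : ℂ) / 2 *
      ∑ p ∈ F.filter (fun p => p + q ∈ F), u (-(p + q)) * u p := by
  rw [hv]
  have h1 : (∑ r ∈ F, ∑ s ∈ F, if r + s = -q then u r * u s else 0)
      = ∑ p ∈ F.filter (fun p => p + q ∈ F), u (-(p + q)) * u p := by
    rw [Finset.sum_filter]
    refine Finset.sum_congr rfl fun r hr => ?_
    rw [Finset.sum_congr rfl fun s _ => if_congr (show r + s = -q ↔ s = -q - r by omega) rfl rfl,
      Finset.sum_ite_eq' F (-q - r) (fun s => u r * u s)]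
    have hiff : (-q - r ∈ F) ↔ (r + q ∈ F) := by
      constructor
      · intro h; have := hF _ h; simpa [neg_sub, sub_neg_eq_add, add_comm] using this
      · intro h; have := hF _ h; simpa [neg_add, sub_eq_add_neg, add_comm] using this
    rw [if_congr hiff rfl rfl]
    split
    · rw [show -q - r = -(r + q) by ring, mul_comm]
    · rfl
  rw [h1]
  push_cast
  ring

lemma vconj_eq (F : Finset ℤ) (hF : ∀ k ∈ F, -k ∈ F) (u v : ℤ → ℂ)
    (hreal : ∀ k ∈ F, u (-k) = starRingEnd ℂ (u k))
    (hv : ∀ q : ℤ, v q =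
      -(Complex.I * (q : ℂ) / 2) * ∑ r ∈ F, ∑ s ∈ F, if r + s = q then u r * u s else 0)
    (q : ℤ) : starRingEnd ℂ (v q) = v (-q) := by
  rw [hv q, hv (-q), map_mul]
  have hc : starRingEnd ℂ (-(Complex.I * (q : ℂ) / 2)) = -(Complex.I * ((-q : ℤ) : ℂ) / 2) := by
    rw [map_neg, map_div₀, map_mul, Complex.conj_I, map_intCast, map_ofNat]
    push_cast
    ring
  rw [hc]
  congr 1
  have h2 : starRingEnd ℂ (∑ r ∈ F, ∑ s ∈ F, if r + s = q then u r * u s else 0)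
      = ∑ r ∈ F, ∑ s ∈ F, if r + s = q then u (-r) * u (-s) else 0 := by
    rw [map_sum]
    refine Finset.sum_congr rfl fun r hr => ?_
    rw [map_sum]
    refine Finset.sum_congr rfl fun s hs => ?_
    rw [apply_ite (starRingEnd ℂ), map_zero, map_mul, ← hreal r hr, ← hreal s hs]
  rw [h2]
  rw [← sum_neg_symm F hF (fun r => ∑ s ∈ F, if r + s = -q then u r * u s else 0)]
  refine Finset.sum_congr rfl fun r hr => ?_
  rw [← sum_neg_symm F hF (fun s => if -r + s = -q then u (-r) * u s else 0)]
  refine Finset.sum_congr rfl fun s hs => ?_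
  exact if_congr (by omega) rfl rfl

lemma M_eq (F : Finset ℤ) (hF : ∀ k ∈ F, -k ∈ F) (u : ℤ → ℂ)
    (hreal : ∀ k ∈ F, u (-k) = starRingEnd ℂ (u k)) (q : ℤ) :
    ∑ p ∈ F.filter (fun p => p + q ∈ F),
        starRingEnd ℂ (u (p + q)) * (-(Complex.I * ((p + q : ℤ) : ℂ))) * u p
    = -(Complex.I * (q : ℂ) / 2) * ∑ p ∈ F.filter (fun p => p + q ∈ F), u (-(p + q)) * u p := by
  set T := F.filter (fun p => p + q ∈ F) with hT
  have hmem : ∀ p ∈ T, p ∈ F ∧ p + q ∈ F := fun p hp => Finset.mem_filter.mp hp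
  have step1 : (∑ p ∈ T, starRingEnd ℂ (u (p + q)) * (-(Complex.I * ((p + q : ℤ) : ℂ))) * u p)
      = ∑ p ∈ T, -(Complex.I * ((p + q : ℤ) : ℂ)) * (u (-(p + q)) * u p) := by
    refine Finset.sum_congr rfl fun p hp => ?_
    rw [hreal _ (hmem p hp).2]
    ring
  have step2 : (∑ p ∈ T, -(Complex.I * ((p + q : ℤ) : ℂ)) * (u (-(p + q)) * u p))
      = ∑ p ∈ T, Complex.I * ((p : ℤ) : ℂ) * (u (-(p + q)) * u p) := by
    refine Finset.sum_nbij' (i := fun p => -(p + q)) (j := fun p => -(p + q)) ?_ ?_ ?_ ?_ ?_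
    · intro p hp
      obtain ⟨h1, h2⟩ := hmem p hp
      rw [hT, Finset.mem_filter]
      refine ⟨hF _ h2, ?_⟩
      have : -(p + q) + q = -p := by ring
      rw [this]
      exact hF _ h1
    · intro p hp
      obtain ⟨h1, h2⟩ := hmem p hp
      rw [hT, Finset.mem_filter]
      refine ⟨hF _ h2, ?_⟩
      have : -(p + q) + q = -p := by ring
      rw [this]
      exact hF _ h1
    · intro p _; ring
    · intro p _; ring
    · intro p hp
      have h3 : -(-(p + q) + q) = p := by ring
      rw [h3]
      push_cast
      ring
  have step3 : (∑ p ∈ T, starRingEnd ℂ (u (p + q)) * (-(Complex.I * ((p + q : ℤ) : ℂ))) * u p)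
        + (∑ p ∈ T, starRingEnd ℂ (u (p + q)) * (-(Complex.I * ((p + q : ℤ) : ℂ))) * u p)
      = -(Complex.I * (q : ℂ)) * ∑ p ∈ T, u (-(p + q)) * u p := by
    rw [step1]
    nth_rewrite 2 [step2]
    rw [← Finset.sum_add_distrib, Finset.mul_sum]
    refine Finset.sum_congr rfl fun p _ => ?_
    push_cast
    ring
  linear_combination step3 / 2

/-- The `t`-model term drains resolved energy: with `F, G` finite symmetric disjoint sets,
`u` satisfying the reality condition on `F`, and
`v_q = −(iq/2) ∑_{r+s=q, r,s∈F} u_r u_s` for `q ∈ G`, one has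
`∑_{k∈F} conj(u_k)(−ik) ∑_{p+q=k, p∈F, q∈G} u_p v_q + (conjugate) = −2 ∑_{q∈G} |v_q|²`. -/
theorem t_model_energy_drain
    (F G : Finset ℤ)
    (hF : ∀ k ∈ F, -k ∈ F) (hG : ∀ q ∈ G, -q ∈ G) (hFG : Disjoint F G)
    (u : ℤ → ℂ) (hreal : ∀ k ∈ F, u (-k) = starRingEnd ℂ (u k))
    (v : ℤ → ℂ)
    (hv : ∀ q : ℤ, v q =
      -(Complex.I * (q : ℂ) / 2) * ∑ r ∈ F, ∑ s ∈ F, if r + s = q then u r * u s else 0) :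
    (∑ k ∈ F, starRingEnd ℂ (u k) * (-(Complex.I * (k : ℂ))) *
        ∑ p ∈ F, ∑ q ∈ G, if p + q = k then u p * v q else 0) +
      starRingEnd ℂ (∑ k ∈ F, starRingEnd ℂ (u k) * (-(Complex.I * (k : ℂ))) *
        ∑ p ∈ F, ∑ q ∈ G, if p + q = k then u p * v q else 0) =
      -2 * ∑ q ∈ G, (‖v q‖ ^ 2 : ℂ) := by
  have hS : (∑ k ∈ F, starRingEnd ℂ (u k) * (-(Complex.I * (k : ℂ))) *
        ∑ p ∈ F, ∑ q ∈ G, if p + q = k then u p * v q else 0)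
      = -∑ q ∈ G, (‖v q‖ ^ 2 : ℂ) := by
    have A1 : (∑ k ∈ F, starRingEnd ℂ (u k) * (-(Complex.I * (k : ℂ))) *
          ∑ p ∈ F, ∑ q ∈ G, if p + q = k then u p * v q else 0)
        = ∑ q ∈ G, ∑ p ∈ F, ∑ k ∈ F,
            if p + q = k then starRingEnd ℂ (u k) * (-(Complex.I * (k : ℂ))) * (u p * v q)
            else 0 := by
      simp only [Finset.mul_sum, mul_ite, mul_zero]
      rw [Finset.sum_comm]
      rw [Finset.sum_congr rfl fun p _ => Finset.sum_comm]
      rw [Finset.sum_comm]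
    rw [A1]
    have A2 : ∀ q ∈ G, (∑ p ∈ F, ∑ k ∈ F,
          if p + q = k then starRingEnd ℂ (u k) * (-(Complex.I * (k : ℂ))) * (u p * v q)
          else 0)
        = -((‖v q‖ : ℂ) ^ 2) := by
      intro q _
      have B1 : (∑ p ∈ F, ∑ k ∈ F,
            if p + q = k then starRingEnd ℂ (u k) * (-(Complex.I * (k : ℂ))) * (u p * v q)
            else 0)
          = (∑ p ∈ F.filter (fun p => p + q ∈ F),
              starRingEnd ℂ (u (p + q)) * (-(Complex.I * ((p + q : ℤ) : ℂ))) * u p) * v q := by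
        rw [Finset.sum_mul, Finset.sum_filter]
        refine Finset.sum_congr rfl fun p _ => ?_
        rw [Finset.sum_ite_eq F (p + q)
          (fun k => starRingEnd ℂ (u k) * (-(Complex.I * (k : ℂ))) * (u p * v q))]
        split
        · ring
        · rfl
      rw [B1, M_eq F hF u hreal q]
      have : -(Complex.I * (q : ℂ) / 2) *
            (∑ p ∈ F.filter (fun p => p + q ∈ F), u (-(p + q)) * u p)
          = -(starRingEnd ℂ (v q)) := by
        rw [vconj_eq F hF u v hreal hv q, vneg_eq F hF u v hv q]
        ring
      rw [this]
      have habs : starRingEnd ℂ (v q) * v q = (‖v q‖ : ℂ) ^ 2 := by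
        rw [mul_comm, Complex.mul_conj, Complex.normSq_eq_norm_sq]
        push_cast
        ring
      rw [neg_mul, habs]
    rw [Finset.sum_congr rfl A2, ← Finset.sum_neg_distrib]
  rw [hS]
  rw [map_neg, map_sum]
  have : ∀ q ∈ G, starRingEnd ℂ ((‖v q‖ : ℂ) ^ 2) = (‖v q‖ : ℂ) ^ 2 := by
    intro q _
    rw [map_pow, Complex.conj_ofReal]
  rw [Finset.sum_congr rfl this]
  ring
end
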